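/- arXiv:1205.2459 — 3 statements merged into one kernel-verified Lean document; each statement's English description precedes it below -/
import Mathlib

section
/- Let f : ℝ → ℝ be C¹ with |f(s)| ≤ C(1+|s|)^p and |f'(s)| ≤ C(1+|s|)^{p−1}, and let f̃(s) = tanh³(s)·|s|^p. Then there exists C' > 0 such that for all u, v ∈ ℝ, |f(v) − f(u)| ≤ C'·|v − u| + C'·|f̃(v) − f̃(u)|. -/
/-!
`f̃` is differentiable and nondecreasing, and `f̃'(s) ≥ p tanh(1)³ |s|^(p-1)` for `|s| ≥ 1`.
Hence the growth bound on `f'` yields `|f'| ≤ K (1 + f̃')` for some `K > 0`, so both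
`x ↦ K x + K f̃(x) + f(x)` and `x ↦ K x + K f̃(x) - f(x)` are monotone.
-/

open Real Asymptotics Topology

theorem Real.hasDerivAt_tanh (x : ℝ) : HasDerivAt tanh (1 / cosh x ^ 2) x := by
  have h := (hasDerivAt_sinh x).div (hasDerivAt_cosh x) (cosh_pos x).ne'
  rw [show tanh = fun y => sinh y / cosh y from funext tanh_eq_sinh_div_cosh]
  refine h.congr_deriv ?_
  field_simp
  linarith [cosh_sq_sub_sinh_sq x]

theorem Real.tanh_strictMono : StrictMono tanh :=
  strictMono_of_hasDerivAt_pos hasDerivAt_tanh fun x => by positivity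

theorem Real.abs_tanh (x : ℝ) : |tanh x| = tanh |x| := by
  rw [tanh_eq_sinh_div_cosh, tanh_eq_sinh_div_cosh, abs_div, abs_sinh, cosh_abs,
    abs_of_pos (cosh_pos x)]

theorem Real.tanh_pos {x : ℝ} (hx : 0 < x) : 0 < tanh x := by
  simpa [tanh_zero] using tanh_strictMono hx

theorem hasDerivAt_mul_of_isBigO_one {g h : ℝ → ℝ} {x : ℝ} (hg : HasDerivAt g 0 x)
    (hgx : g x = 0) (hh : h =O[𝓝 x] fun _ => (1 : ℝ)) :
    HasDerivAt (fun t => g t * h t) 0 x := by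
  rw [hasDerivAt_iff_isLittleO] at hg ⊢
  simpa [hgx] using hg.mul_isBigO hh

noncomputable def tanhCubeRpow (p s : ℝ) : ℝ := tanh s ^ 3 * |s| ^ p

noncomputable def tanhCubeRpowDeriv (p s : ℝ) : ℝ :=
  3 * tanh s ^ 2 / cosh s ^ 2 * |s| ^ p + p * |tanh s| ^ 3 * |s| ^ (p - 1)

theorem hasDerivAt_tanhCubeRpow {p : ℝ} (hp : 0 ≤ p) (s : ℝ) :
    HasDerivAt (tanhCubeRpow p) (tanhCubeRpowDeriv p s) s := by
  have htanh3 : HasDerivAt (fun t => tanh t ^ 3) (3 * tanh s ^ 2 / cosh s ^ 2) s :=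
    ((hasDerivAt_tanh s).fun_pow 3).congr_deriv (by push_cast; ring)
  show HasDerivAt (fun t => tanh t ^ 3 * |t| ^ p) _ s
  rcases eq_or_ne s 0 with rfl | hs
  -- `|t| ^ p` need not be differentiable at `0` (e.g. `p = 1`), but it is bounded there.
  · have hbdd : (fun t : ℝ => |t| ^ p) =O[𝓝 0] fun _ => (1 : ℝ) :=
      ((continuousAt_rpow_const _ p (Or.inr hp)).comp continuous_abs.continuousAt).isBigO_one ℝ
    exact (hasDerivAt_mul_of_isBigO_one (by simpa using htanh3) (by simp) hbdd).congr_deriv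
      (by simp [tanhCubeRpowDeriv])
  · have hrpow : HasDerivAt (fun t : ℝ => |t| ^ p) (p * |s| ^ (p - 1) * SignType.sign s) s :=
      (hasDerivAt_rpow_const (Or.inl (abs_ne_zero.mpr hs))).comp s (hasDerivAt_abs hs)
    have hsign : tanh s ^ 3 * SignType.sign s = |tanh s| ^ 3 := by
      rcases hs.lt_or_gt with h | h
      · rw [sign_neg h, abs_of_neg (by simpa [tanh_zero] using tanh_strictMono h),
          SignType.coe_neg_one]
        ring
      · rw [sign_pos h, abs_of_pos (tanh_pos h), SignType.coe_one, mul_one]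
    refine (htanh3.mul hrpow).congr_deriv ?_
    rw [tanhCubeRpowDeriv, ← hsign]
    ring

theorem tanhCubeRpowDeriv_nonneg {p : ℝ} (hp : 0 ≤ p) (s : ℝ) : 0 ≤ tanhCubeRpowDeriv p s := by
  unfold tanhCubeRpowDeriv
  have := rpow_nonneg (abs_nonneg s) p
  have := rpow_nonneg (abs_nonneg s) (p - 1)
  positivity

theorem mul_rpow_le_tanhCubeRpowDeriv {p s : ℝ} (hp : 0 ≤ p) (hs : 1 ≤ |s|) :
    p * tanh 1 ^ 3 * |s| ^ (p - 1) ≤ tanhCubeRpowDeriv p s := by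
  have htanh : tanh 1 ≤ |tanh s| := abs_tanh s ▸ tanh_strictMono.monotone hs
  have hfirst : 0 ≤ 3 * tanh s ^ 2 / cosh s ^ 2 * |s| ^ p := by
    have := rpow_nonneg (abs_nonneg s) p
    positivity
  have hsecond : p * tanh 1 ^ 3 * |s| ^ (p - 1) ≤ p * |tanh s| ^ 3 * |s| ^ (p - 1) := by
    gcongr
    exact (tanh_pos one_pos).le
  unfold tanhCubeRpowDeriv
  linarith

theorem exists_one_add_abs_rpow_le {p : ℝ} (hp : 1 ≤ p) :
    ∃ K > 0, ∀ s, (1 + |s|) ^ (p - 1) ≤ K * (1 + tanhCubeRpowDeriv p s) := by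
  set c := p * tanh 1 ^ 3
  have hc : 0 < c := by have := tanh_pos one_pos; positivity
  refine ⟨2 ^ (p - 1) * (1 + c⁻¹), by positivity, fun s => ?_⟩
  have hD := tanhCubeRpowDeriv_nonneg (p := p) (by linarith) s
  have hmax : max 1 (c⁻¹ * tanhCubeRpowDeriv p s) ≤ (1 + c⁻¹) * (1 + tanhCubeRpowDeriv p s) := by
    have hcinv : 0 ≤ c⁻¹ := inv_nonneg.mpr hc.le
    have := mul_nonneg hcinv hD
    refine max_le ?_ ?_ <;> linarith [show (1 + c⁻¹) * (1 + tanhCubeRpowDeriv p s)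
      = 1 + tanhCubeRpowDeriv p s + c⁻¹ + c⁻¹ * tanhCubeRpowDeriv p s by ring]
  suffices (1 + |s|) ^ (p - 1) ≤ 2 ^ (p - 1) * max 1 (c⁻¹ * tanhCubeRpowDeriv p s) by
    rw [mul_assoc]
    exact this.trans (by gcongr)
  rcases le_total |s| 1 with hs | hs
  · calc (1 + |s|) ^ (p - 1) ≤ 2 ^ (p - 1) * 1 := by
          rw [mul_one]
          gcongr
          linarith
      _ ≤ _ := by gcongr; exact le_max_left _ _
  · calc (1 + |s|) ^ (p - 1) ≤ (2 * |s|) ^ (p - 1) := by gcongr; linarith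
      _ = 2 ^ (p - 1) * (c⁻¹ * (c * |s| ^ (p - 1))) := by
          rw [mul_rpow (by norm_num) (abs_nonneg s), inv_mul_cancel_left₀ hc.ne']
      _ ≤ 2 ^ (p - 1) * (c⁻¹ * tanhCubeRpowDeriv p s) := by
          gcongr
          exact mul_rpow_le_tanhCubeRpowDeriv (by linarith) hs
      _ ≤ _ := by gcongr; exact le_max_right _ _

theorem abs_sub_le_of_abs_deriv_le {f g g' : ℝ → ℝ} {K : ℝ} (hf : Differentiable ℝ f)
    (hg : ∀ x, HasDerivAt g (g' x) x) (hg' : ∀ x, 0 ≤ g' x)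
    (hbound : ∀ x, |deriv f x| ≤ K * (1 + g' x)) (u v : ℝ) :
    |f v - f u| ≤ K * |v - u| + K * |g v - g u| := by
  wlog huv : u ≤ v generalizing u v
  · rw [abs_sub_comm, abs_sub_comm v, abs_sub_comm (g v)]
    exact this v u (le_of_not_ge huv)
  have hmono (σ : ℝ) (hσ : ∀ x, 0 ≤ K + K * g' x + σ * deriv f x) :
      K * u + K * g u + σ * f u ≤ K * v + K * g v + σ * f v :=
    monotone_of_hasDerivAt_nonneg (f' := fun x => K + K * g' x + σ * deriv f x) (fun x => by
      simpa using (((hasDerivAt_id x).const_mul K).add ((hg x).const_mul K)).add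
        ((hf x).hasDerivAt.const_mul σ)) hσ huv
  have hup := hmono 1 fun x => by linarith [(abs_le.mp (hbound x)).1]
  have hdown := hmono (-1) fun x => by linarith [(abs_le.mp (hbound x)).2]
  rw [abs_of_nonneg (sub_nonneg.mpr huv),
    abs_of_nonneg (sub_nonneg.mpr (monotone_of_hasDerivAt_nonneg hg hg' huv)), abs_sub_le_iff]
  constructor <;> linarith

theorem stmt_4_general (p C : ℝ) (hp : 1 ≤ p) (hC : 0 < C)
    (f : ℝ → ℝ) (hf : ContDiff ℝ 1 f)
    (hgrowth' : ∀ s, |deriv f s| ≤ C * (1 + |s|) ^ (p - 1))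
    (ftilde : ℝ → ℝ) (hftilde : ∀ s, ftilde s = (Real.tanh s) ^ 3 * |s| ^ p) :
    ∃ C' > (0:ℝ), ∀ u v : ℝ,
      |f v - f u| ≤ C' * |v - u| + C' * |ftilde v - ftilde u| := by
  obtain ⟨K, hK, hpoly⟩ := exists_one_add_abs_rpow_le hp
  have hftilde' : ftilde = tanhCubeRpow p := funext hftilde
  refine ⟨C * K, by positivity, fun u v => hftilde' ▸ ?_⟩
  refine abs_sub_le_of_abs_deriv_le (hf.differentiable one_ne_zero)
    (hasDerivAt_tanhCubeRpow (by linarith)) (tanhCubeRpowDeriv_nonneg (by linarith))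
    (fun s => ?_) u v
  calc |deriv f s| ≤ C * (1 + |s|) ^ (p - 1) := hgrowth' s
    _ ≤ C * (K * (1 + tanhCubeRpowDeriv p s)) := by gcongr; exact hpoly s
    _ = C * K * (1 + tanhCubeRpowDeriv p s) := by ring

theorem stmt_4 (p C : ℝ) (hp : 1 ≤ p) (hC : 0 < C)
    (f : ℝ → ℝ) (hf : ContDiff ℝ 1 f)
    (hgrowth : ∀ s, |f s| ≤ C * (1 + |s|) ^ p)
    (hgrowth' : ∀ s, |deriv f s| ≤ C * (1 + |s|) ^ (p - 1))
    (ftilde : ℝ → ℝ) (hftilde : ∀ s, ftilde s = (Real.tanh s) ^ 3 * |s| ^ p) :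
    ∃ C' > (0:ℝ), ∀ u v : ℝ,
      |f v - f u| ≤ C' * |v - u| + C' * |ftilde v - ftilde u| :=
  stmt_4_general p C hp hC f hf hgrowth' ftilde hftilde
end

section
/- The space 𝒞 of C¹ functions f : ℝ → ℝ satisfying f(0)=0, s·f(s) ≥ 0, and growth bounds |f(s)| ≤ C(1+|s|)^p, |f'(s)| ≤ C(1+|s|)^{p−1} for some C > 0 and p ∈ [1,5), endowed with the Whitney topology (neighborhoods N_{f,δ} = {g : ∀u, max(|f(u)−g(u)|, |f'(u)−g'(u)|) < δ(u)} for positive continuous δ), is a Baire space: any countable intersection of dense open subsets is dense. -/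
/-!
A Choquet-type nested-ball argument. Write `c1Dist f g u = max |f u - g u| |f' u - g' u|`.
Given a nonempty open `V` and dense open sets `U n`, choose centres `fₙ` and positive continuous
radii `δₙ` with `δₙ₊₁ ≤ δₙ / 2`, `c1Dist fₙ fₙ₊₁ < δₙ`, the closed ball of radius `2 δ₀` around
`f₀` inside `V` and the closed ball of radius `2 δₙ₊₁` around `fₙ₊₁` inside `U n`. Telescoping
gives `c1Dist fₙ fₘ ≤ 2 δₙ ≤ 2 · 2⁻ⁿ` for `n ≤ m`, so the `fₙ` and `fₙ'` converge uniformly and the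
limit `F` is `C¹` with `c1Dist fₙ F ≤ 2 δₙ`; hence `F` lies in every closed ball. The constraints
defining the class survive: `F 0 = 0` and `s F(s) ≥ 0` are closed under pointwise limits, and the
growth bounds hold because `F` is at bounded `C¹` distance from `f₀`.
-/

/-- The class of `C¹` defocusing subcritical nonlinearities. -/
def GoodFun (f : ℝ → ℝ) : Prop :=
  ContDiff ℝ 1 f ∧ f 0 = 0 ∧ (∀ s : ℝ, 0 ≤ s * f s) ∧
    ∃ C : ℝ, 0 < C ∧ ∃ p : ℝ, 1 ≤ p ∧ p < 5 ∧
      ∀ s : ℝ, |f s| ≤ C * (1 + |s|) ^ p ∧ |deriv f s| ≤ C * (1 + |s|) ^ (p - 1)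

/-- Whitney neighbourhood basis sets on the class `GoodFun`. -/
def whitneyTopology : TopologicalSpace {f : ℝ → ℝ // GoodFun f} :=
  TopologicalSpace.generateFrom
    { S | ∃ (f : ℝ → ℝ), GoodFun f ∧ ∃ δ : ℝ → ℝ, Continuous δ ∧ (∀ u, 0 < δ u) ∧
        S = { g : {f : ℝ → ℝ // GoodFun f} |
          ∀ u : ℝ, max |f u - g.1 u| |deriv f u - deriv g.1 u| < δ u } }

open Set Filter Topology

noncomputable def c1Dist (f g : ℝ → ℝ) (u : ℝ) : ℝ :=
  max |f u - g u| |deriv f u - deriv g u|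

section C1Dist

variable {f g h : ℝ → ℝ} {u : ℝ}

lemma abs_sub_le_c1Dist : |f u - g u| ≤ c1Dist f g u := le_max_left _ _

lemma abs_deriv_sub_le_c1Dist : |deriv f u - deriv g u| ≤ c1Dist f g u := le_max_right _ _

lemma c1Dist_nonneg : 0 ≤ c1Dist f g u := (abs_nonneg _).trans abs_sub_le_c1Dist

lemma c1Dist_self : c1Dist f f u = 0 := by simp [c1Dist]

lemma c1Dist_triangle : c1Dist f h u ≤ c1Dist f g u + c1Dist g h u :=
  max_le ((abs_sub_le _ _ _).trans (add_le_add abs_sub_le_c1Dist abs_sub_le_c1Dist))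
    ((abs_sub_le _ _ _).trans (add_le_add abs_deriv_sub_le_c1Dist abs_deriv_sub_le_c1Dist))

lemma continuous_c1Dist (hf : ContDiff ℝ 1 f) (hg : ContDiff ℝ 1 g) : Continuous (c1Dist f g) :=
  ((hf.continuous.sub hg.continuous).abs).max
    (((hf.continuous_deriv le_rfl).sub (hg.continuous_deriv le_rfl)).abs)

end C1Dist

lemma c1Dist_le_of_le_half {f : ℕ → ℝ → ℝ} {δ : ℕ → ℝ → ℝ}
    (hstep : ∀ n u, c1Dist (f n) (f (n + 1)) u ≤ δ n u) (hhalf : ∀ n u, δ (n + 1) u ≤ δ n u / 2)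
    {n m : ℕ} (hnm : n ≤ m) (u : ℝ) : c1Dist (f n) (f m) u ≤ 2 * δ n u - 2 * δ m u := by
  induction m, hnm using Nat.le_induction with
  | base => simp [c1Dist_self]
  | succ m _ ih =>
    calc c1Dist (f n) (f (m + 1)) u ≤ c1Dist (f n) (f m) u + c1Dist (f m) (f (m + 1)) u :=
          c1Dist_triangle
      _ ≤ 2 * δ n u - 2 * δ (m + 1) u := by linarith [hstep m u, hhalf m u]

lemma le_pow_mul_of_le_half {a : ℕ → ℝ} (h : ∀ n, a (n + 1) ≤ a n / 2) (n : ℕ) :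
    a n ≤ (1 / 2) ^ n * a 0 := by
  induction n with
  | zero => simp
  | succ n ih => rw [pow_succ]; linarith [h n]

lemma exists_tendsto_dist_le {α : Type*} [PseudoMetricSpace α] [CompleteSpace α] {a : ℕ → α}
    {e : ℕ → ℝ} (h : ∀ n m, n ≤ m → dist (a n) (a m) ≤ e n) (he : Tendsto e atTop (𝓝 0)) :
    ∃ L, Tendsto a atTop (𝓝 L) ∧ ∀ n, dist (a n) L ≤ e n := by
  obtain ⟨L, hL⟩ := cauchySeq_tendsto_of_complete (cauchySeq_of_le_tendsto_0' e h he)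
  refine ⟨L, hL, fun n => le_of_tendsto (tendsto_const_nhds.dist hL) ?_⟩
  filter_upwards [eventually_ge_atTop n] with m hm using h n m hm

theorem exists_contDiff_one_limit {f : ℕ → ℝ → ℝ} (hf : ∀ n, ContDiff ℝ 1 (f n))
    {ε : ℕ → ℝ → ℝ} {r : ℕ → ℝ} (hcauchy : ∀ n m u, n ≤ m → c1Dist (f n) (f m) u ≤ ε n u)
    (hεr : ∀ n u, ε n u ≤ r n) (hr : Tendsto r atTop (𝓝 0)) :
    ∃ F, ContDiff ℝ 1 F ∧ (∀ u, Tendsto (fun n => f n u) atTop (𝓝 (F u))) ∧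
      ∀ n u, c1Dist (f n) F u ≤ ε n u := by
  have hε u : Tendsto (fun n => ε n u) atTop (𝓝 0) :=
    squeeze_zero (fun n => c1Dist_nonneg.trans (hcauchy n n u le_rfl)) (fun n => hεr n u) hr
  choose F hF hFε using fun u => exists_tendsto_dist_le (a := fun n => f n u)
    (fun n m hnm => abs_sub_le_c1Dist.trans (hcauchy n m u hnm)) (hε u)
  choose G hG hGε using fun u => exists_tendsto_dist_le (a := fun n => deriv (f n) u)
    (fun n m hnm => abs_deriv_sub_le_c1Dist.trans (hcauchy n m u hnm)) (hε u)
  have hunif : TendstoUniformly (fun n => deriv (f n)) G atTop := by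
    refine Metric.tendstoUniformly_iff.2 fun η hη => ?_
    filter_upwards [hr.eventually (gt_mem_nhds hη)] with n hn u
    rw [dist_comm]
    exact (hGε u n).trans_lt ((hεr n u).trans_lt hn)
  have hFG u : HasDerivAt F (G u) u :=
    hasDerivAt_of_tendstoUniformly hunif
      (Eventually.of_forall fun n u => ((hf n).differentiable one_ne_zero u).hasDerivAt) hF u
  have hderiv : deriv F = G := funext fun u => (hFG u).deriv
  have hGcont : Continuous G :=
    hunif.continuous (Eventually.of_forall fun n => (hf n).continuous_deriv le_rfl).frequently
  refine ⟨F, contDiff_one_iff_deriv.2 ⟨fun u => (hFG u).differentiableAt, hderiv ▸ hGcont⟩, hF,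
    fun n u => max_le (hFε u n) ?_⟩
  rw [hderiv]
  exact hGε u n

lemma GoodFun.of_c1Dist_le {g F : ℝ → ℝ} {K : ℝ} (hg : GoodFun g) (hF : ContDiff ℝ 1 F)
    (h0 : F 0 = 0) (hsign : ∀ s, 0 ≤ s * F s) (hK : ∀ u, c1Dist g F u ≤ K) : GoodFun F := by
  obtain ⟨-, -, -, C, hC, p, hp1, hp5, hgrowth⟩ := hg
  have hK0 : 0 ≤ K := c1Dist_nonneg.trans (hK 0)
  have transfer (a b t : ℝ) (ha : |a| ≤ C * t) (hab : |a - b| ≤ K) (ht : 1 ≤ t) :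
      |b| ≤ (C + K) * t := by
    have := abs_sub_abs_le_abs_sub b a
    rw [abs_sub_comm b a] at this
    nlinarith
  refine ⟨hF, h0, hsign, C + K, by linarith, p, hp1, hp5, fun s => ⟨?_, ?_⟩⟩
  · exact transfer _ _ _ (hgrowth s).1 (abs_sub_le_c1Dist.trans (hK s))
      (Real.one_le_rpow (by linarith [abs_nonneg s]) (by linarith))
  · exact transfer _ _ _ (hgrowth s).2 (abs_deriv_sub_le_c1Dist.trans (hK s))
      (Real.one_le_rpow (by linarith [abs_nonneg s]) (by linarith))

lemma GoodFun.of_tendsto {f : ℕ → ℝ → ℝ} {F : ℝ → ℝ} {N : ℕ} {K : ℝ}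
    (hf : ∀ n, GoodFun (f n)) (hF : ContDiff ℝ 1 F)
    (hlim : ∀ u, Tendsto (fun n => f n u) atTop (𝓝 (F u))) (hK : ∀ u, c1Dist (f N) F u ≤ K) :
    GoodFun F :=
  (hf N).of_c1Dist_le hF
    (tendsto_nhds_unique (hlim 0) (tendsto_const_nhds.congr fun n => ((hf n).2.1).symm))
    (fun s => ge_of_tendsto ((hlim s).const_mul s) (Eventually.of_forall fun n => (hf n).2.2.1 s))
    hK

theorem exists_seq_of_forall_exists {α : Type*} {R : ℕ → α → α → Prop}
    (h : ∀ n a, ∃ b, R n a b) (a₀ : α) : ∃ s : ℕ → α, s 0 = a₀ ∧ ∀ n, R n (s n) (s (n + 1)) := by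
  choose next hnext using h
  exact ⟨fun n => Nat.rec a₀ next n, rfl, fun n => hnext n _⟩

section WhitneyTopology

attribute [local instance] whitneyTopology

abbrev GoodFunSpace : Type := {f : ℝ → ℝ // GoodFun f}

def whitneyBall (f δ : ℝ → ℝ) : Set GoodFunSpace := {g | ∀ u, c1Dist f g.1 u < δ u}

def whitneyClosedBall (g : GoodFunSpace) (δ : ℝ → ℝ) : Set GoodFunSpace :=
  {h | ∀ u, c1Dist g.1 h.1 u ≤ δ u}

def whitneyBalls : Set (Set GoodFunSpace) :=
  {S | ∃ f, GoodFun f ∧ ∃ δ : ℝ → ℝ, Continuous δ ∧ (∀ u, 0 < δ u) ∧ S = whitneyBall f δ}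

lemma mem_whitneyBall_self (g : GoodFunSpace) {δ : ℝ → ℝ} (hδ : ∀ u, 0 < δ u) :
    g ∈ whitneyBall g.1 δ := fun u => c1Dist_self (f := g.1) ▸ hδ u

lemma whitneyBall_mono {f δ δ' : ℝ → ℝ} (h : ∀ u, δ u ≤ δ' u) :
    whitneyBall f δ ⊆ whitneyBall f δ' :=
  fun _ hg u => (hg u).trans_le (h u)

lemma exists_whitneyBall_subset_of_mem {t : Set GoodFunSpace} (ht : t ∈ whitneyBalls)
    {g : GoodFunSpace} (hg : g ∈ t) :
    ∃ δ : ℝ → ℝ, Continuous δ ∧ (∀ u, 0 < δ u) ∧ whitneyBall g.1 δ ⊆ t := by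
  obtain ⟨f, hf, η, hηc, -, rfl⟩ := ht
  refine ⟨fun u => η u - c1Dist f g.1 u, hηc.sub (continuous_c1Dist hf.1 g.2.1),
    fun u => sub_pos.2 (hg u), fun h hh u => ?_⟩
  linarith [c1Dist_triangle (f := f) (g := g.1) (h := h.1) (u := u), hh u]

lemma isTopologicalBasis_whitneyBalls :
    TopologicalSpace.IsTopologicalBasis whitneyBalls := by
  refine ⟨?_, ?_, rfl⟩
  · rintro t₁ h₁ t₂ h₂ g ⟨hg₁, hg₂⟩
    obtain ⟨δ₁, hc₁, hp₁, hs₁⟩ := exists_whitneyBall_subset_of_mem h₁ hg₁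
    obtain ⟨δ₂, hc₂, hp₂, hs₂⟩ := exists_whitneyBall_subset_of_mem h₂ hg₂
    have hpos u : 0 < min (δ₁ u) (δ₂ u) := lt_min (hp₁ u) (hp₂ u)
    exact ⟨_, ⟨g.1, g.2, _, hc₁.min hc₂, hpos, rfl⟩, mem_whitneyBall_self g hpos,
      subset_inter ((whitneyBall_mono fun u => min_le_left _ _).trans hs₁)
        ((whitneyBall_mono fun u => min_le_right _ _).trans hs₂)⟩
  · exact eq_univ_of_forall fun g => ⟨_, ⟨g.1, g.2, _, continuous_const, fun _ => one_pos, rfl⟩,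
      mem_whitneyBall_self g fun _ => one_pos⟩

lemma isOpen_whitneyBall {f δ : ℝ → ℝ} (hf : GoodFun f) (hc : Continuous δ) (hp : ∀ u, 0 < δ u) :
    IsOpen (whitneyBall f δ) :=
  isTopologicalBasis_whitneyBalls.isOpen ⟨f, hf, δ, hc, hp, rfl⟩

lemma exists_whitneyClosedBall_subset {t : Set GoodFunSpace} (ht : IsOpen t) {g : GoodFunSpace}
    (hg : g ∈ t) {β : ℝ → ℝ} (hβc : Continuous β) (hβ : ∀ u, 0 < β u) :
    ∃ δ : ℝ → ℝ, Continuous δ ∧ (∀ u, 0 < δ u) ∧ (∀ u, δ u ≤ β u) ∧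
      whitneyClosedBall g (fun u => 2 * δ u) ⊆ t := by
  obtain ⟨t', ht', hgt', ht't⟩ := isTopologicalBasis_whitneyBalls.exists_subset_of_mem_open hg ht
  obtain ⟨η, hηc, hη, hηt'⟩ := exists_whitneyBall_subset_of_mem ht' hgt'
  refine ⟨fun u => min (η u / 3) (β u), (hηc.div_const 3).min hβc,
    fun u => lt_min (by linarith [hη u]) (hβ u), fun u => min_le_right _ _,
    fun h hh => ht't (hηt' fun u => ?_)⟩
  linarith [hh u, min_le_left (η u / 3) (β u), hη u]

structure Stage where
  center : GoodFunSpace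
  radius : ℝ → ℝ
  continuous_radius : Continuous radius
  radius_pos : ∀ u, 0 < radius u

structure Stage.Refines (W : Set GoodFunSpace) (s t : Stage) : Prop where
  center_mem : t.center ∈ whitneyBall s.center.1 s.radius
  radius_le_half : ∀ u, t.radius u ≤ s.radius u / 2
  closedBall_subset : whitneyClosedBall t.center (fun u => 2 * t.radius u) ⊆ W

lemma Stage.exists_refines {W : Set GoodFunSpace} (hWo : IsOpen W) (hWd : Dense W) (s : Stage) :
    ∃ t, s.Refines W t := by
  obtain ⟨g, hgW, hgs⟩ := hWd.exists_mem_open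
    (isOpen_whitneyBall s.center.2 s.continuous_radius s.radius_pos)
    ⟨s.center, mem_whitneyBall_self _ s.radius_pos⟩
  obtain ⟨δ, hδc, hδ, hδs, hδW⟩ := exists_whitneyClosedBall_subset hWo hgW
    (s.continuous_radius.div_const 2) fun u => half_pos (s.radius_pos u)
  exact ⟨⟨g, δ, hδc, hδ⟩, hgs, hδs, hδW⟩

end WhitneyTopology

theorem stmt_15 : @BaireSpace {f : ℝ → ℝ // GoodFun f} whitneyTopology := by
  let := whitneyTopology
  refine ⟨fun U hUo hUd => dense_iff_inter_open.2 fun V hVo ⟨x, hxV⟩ => ?_⟩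
  obtain ⟨δ₀, hδ₀c, hδ₀, hδ₀le, hδ₀V⟩ :=
    exists_whitneyClosedBall_subset hVo hxV continuous_const fun _ => one_pos
  obtain ⟨s, hs0, hs⟩ := exists_seq_of_forall_exists
    (fun n => Stage.exists_refines (hUo n) (hUd n)) ⟨x, δ₀, hδ₀c, hδ₀⟩
  have hradius n u : (s n).radius u ≤ (1 / 2) ^ n := by
    have hgeom := le_pow_mul_of_le_half (a := fun n => (s n).radius u)
      (fun n => (hs n).radius_le_half u) n
    simp only [hs0] at hgeom
    exact hgeom.trans (mul_le_of_le_one_right (by positivity) (hδ₀le u))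
  have hrate n u : 2 * (s n).radius u ≤ 2 * (1 / 2) ^ n := by linarith [hradius n u]
  obtain ⟨F, hF, hlim, hdist⟩ := exists_contDiff_one_limit (fun n => (s n).center.2.1)
    (fun n m u hnm => (c1Dist_le_of_le_half (fun n u => ((hs n).center_mem u).le)
      (fun n => (hs n).radius_le_half) hnm u).trans (by linarith [(s m).radius_pos u]))
    hrate (by simpa using (tendsto_pow_atTop_nhds_zero_of_lt_one (r := (1 / 2 : ℝ))
      (by norm_num) (by norm_num)).const_mul 2)
  have hFgood : GoodFun F :=
    GoodFun.of_tendsto (fun n => (s n).center.2) hF hlim fun u => (hdist 0 u).trans (hrate 0 u)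
  refine ⟨⟨F, hFgood⟩, hδ₀V fun u => ?_,
    mem_iInter.2 fun n => (hs n).closedBall_subset (hdist (n + 1))⟩
  simpa [hs0] using hdist 0 u
end

section
/- Given a ≥ 0 and f₀ : ℝ → ℝ continuous with f₀(0) = 0 and s·f₀(s) ≥ 0, for every ε > 0 there exists a real-analytic function f : [−a,a] → ℝ with f(0) = 0, s·f(s) ≥ 0 on [−a,a], and sup_{[−a,a]} |f − f₀| ≤ ε. (Density of analytic defocusing nonlinearities.) -/
/-!
Write `f₀ s = s · (s f₀(s) / s²)`; the quotient `s f₀(s) / s²` is nonnegative but may blow up at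
`0`, so regularize it to `ψ_τ s = s f₀(s) / (s² + τ)`, which is continuous and nonnegative. The
defect `f₀ - s ψ_τ = f₀ · τ / (s² + τ)` is uniformly small for small `τ`: near `0` because
`f₀ 0 = 0`, away from `0` because `τ / (s² + τ) ≤ τ / s²`. Approximating `ψ_τ` from above by a
polynomial `q ≥ 0` (Weierstrass), the polynomial `s q(s)` is the required analytic function.
-/

open Set Polynomial

/-- A continuous substitute for `f s / s`, nonnegative when `s f(s) ≥ 0`. -/
noncomputable def regularizedQuotient (f : ℝ → ℝ) (τ s : ℝ) : ℝ :=
  s * f s / (s ^ 2 + τ)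

lemma regularizedQuotient_nonneg {f : ℝ → ℝ} {τ s : ℝ} (hτ : 0 ≤ τ) (hs : 0 ≤ s * f s) :
    0 ≤ regularizedQuotient f τ s :=
  div_nonneg hs (by positivity)

lemma continuous_regularizedQuotient {f : ℝ → ℝ} {τ : ℝ} (hf : Continuous f) (hτ : 0 < τ) :
    Continuous (regularizedQuotient f τ) :=
  (continuous_id.mul hf).div (by fun_prop) fun s ↦ by positivity

lemma mul_regularizedQuotient_sub (f : ℝ → ℝ) {τ : ℝ} (hτ : 0 < τ) (s : ℝ) :
    s * regularizedQuotient f τ s - f s = -(f s * (τ / (s ^ 2 + τ))) := by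
  have : s ^ 2 + τ ≠ 0 := by positivity
  unfold regularizedQuotient
  field_simp
  ring

lemma exists_pos_forall_abs_mul_regularizedQuotient_sub_le {f : ℝ → ℝ} {K : Set ℝ} {M ε : ℝ}
    (hf : ContinuousAt f 0) (hf0 : f 0 = 0) (hM : ∀ s ∈ K, |f s| ≤ M) (hε : 0 < ε) :
    ∃ τ > 0, ∀ s ∈ K, |s * regularizedQuotient f τ s - f s| ≤ ε := by
  obtain ⟨δ, hδ, hsmall⟩ := Metric.continuousAt_iff.mp hf ε hε
  simp only [dist_zero_right, hf0, Real.norm_eq_abs] at hsmall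
  refine ⟨δ ^ 2 * ε / (|M| + 1), by positivity, fun s hs ↦ ?_⟩
  set τ := δ ^ 2 * ε / (|M| + 1)
  have hτ : 0 < τ := by positivity
  rw [mul_regularizedQuotient_sub f hτ, abs_neg, abs_mul,
    abs_of_pos (by positivity : 0 < τ / (s ^ 2 + τ))]
  rcases lt_or_ge |s| δ with hsδ | hsδ
  · have hfrac : τ / (s ^ 2 + τ) ≤ 1 := div_le_one_of_le₀ (by nlinarith) (by positivity)
    nlinarith [(hsmall hsδ).le, abs_nonneg (f s)]
  · have hδs : δ ^ 2 ≤ s ^ 2 + τ := by nlinarith [sq_abs s]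
    calc |f s| * (τ / (s ^ 2 + τ)) ≤ (|M| + 1) * (τ / δ ^ 2) := by
          gcongr
          linarith [hM s hs, le_abs_self M]
      _ = ε := by simp only [τ]; field_simp

lemma exists_nonneg_polynomial_near {ψ : ℝ → ℝ} {a b η : ℝ} (hψ : ContinuousOn ψ (Icc a b))
    (hψ0 : ∀ s ∈ Icc a b, 0 ≤ ψ s) (hη : 0 < η) :
    ∃ q : ℝ[X], ∀ s ∈ Icc a b, 0 ≤ q.eval s ∧ |q.eval s - ψ s| ≤ η := by
  obtain ⟨p, hp⟩ := exists_polynomial_near_of_continuousOn a b ψ hψ (η / 2) (half_pos hη)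
  refine ⟨p + C (η / 2), fun s hs ↦ ?_⟩
  have := abs_lt.mp (hp s hs)
  simp only [eval_add, eval_C]
  exact ⟨by linarith [hψ0 s hs], abs_le.mpr ⟨by linarith, by linarith⟩⟩

lemma exists_nonneg_polynomial_mul_id_near {f ψ : ℝ → ℝ} {a ε δ : ℝ}
    (hψ : ContinuousOn ψ (Icc (-a) a)) (hψ0 : ∀ s ∈ Icc (-a) a, 0 ≤ ψ s) (hδ : 0 < δ)
    (happrox : ∀ s ∈ Icc (-a) a, |s * ψ s - f s| ≤ ε) :
    ∃ q : ℝ[X], ∀ s ∈ Icc (-a) a, 0 ≤ q.eval s ∧ |s * q.eval s - f s| ≤ ε + δ := by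
  obtain ⟨q, hq⟩ := exists_nonneg_polynomial_near hψ hψ0 (by positivity : 0 < δ / (|a| + 1))
  refine ⟨q, fun s hs ↦ ⟨(hq s hs).1, ?_⟩⟩
  have hsa : |s| ≤ |a| + 1 := by linarith [abs_le.mpr ⟨hs.1, hs.2⟩, le_abs_self a]
  calc |s * q.eval s - f s| ≤ |s| * |q.eval s - ψ s| + |s * ψ s - f s| := by
        rw [← abs_mul, mul_sub]
        exact abs_sub_le _ _ _
    _ ≤ (|a| + 1) * (δ / (|a| + 1)) + ε := by
        gcongr
        · exact (hq s hs).2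
        · exact happrox s hs
    _ = ε + δ := by field_simp; ring

open Set in
theorem stmt_18_general (a : ℝ) (f₀ : ℝ → ℝ) (hcont : Continuous f₀)
    (hf0 : f₀ 0 = 0) (hsign : ∀ s : ℝ, 0 ≤ s * f₀ s) (ε : ℝ) (hε : 0 < ε) :
    ∃ f : ℝ → ℝ, AnalyticOn ℝ f (Icc (-a) a) ∧ f 0 = 0 ∧
      (∀ s ∈ Icc (-a) a, 0 ≤ s * f s) ∧
      ∀ s ∈ Icc (-a) a, |f s - f₀ s| ≤ ε := by
  obtain ⟨M, hM⟩ :=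
    (isCompact_Icc (a := -a) (b := a)).exists_bound_of_continuousOn hcont.continuousOn
  obtain ⟨τ, hτ, hreg⟩ := exists_pos_forall_abs_mul_regularizedQuotient_sub_le hcont.continuousAt
    hf0 hM (half_pos hε)
  obtain ⟨q, hq⟩ := exists_nonneg_polynomial_mul_id_near
    (continuous_regularizedQuotient hcont hτ).continuousOn
    (fun s _ ↦ regularizedQuotient_nonneg hτ.le (hsign s)) (half_pos hε) hreg
  refine ⟨fun s ↦ s * q.eval s,
    analyticOn_id.mul ((AnalyticOn.eval_polynomial q).mono (subset_univ _)), zero_mul _,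
    fun s hs ↦ ?_, fun s hs ↦ add_halves ε ▸ (hq s hs).2⟩
  rw [← mul_assoc]
  exact mul_nonneg (mul_self_nonneg s) (hq s hs).1

open Set in
theorem stmt_18 (a : ℝ) (ha : 0 < a) (f₀ : ℝ → ℝ) (hcont : Continuous f₀)
    (hf0 : f₀ 0 = 0) (hsign : ∀ s : ℝ, 0 ≤ s * f₀ s) (ε : ℝ) (hε : 0 < ε) :
    ∃ f : ℝ → ℝ, AnalyticOn ℝ f (Icc (-a) a) ∧ f 0 = 0 ∧
      (∀ s ∈ Icc (-a) a, 0 ≤ s * f s) ∧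
      ∀ s ∈ Icc (-a) a, |f s - f₀ s| ≤ ε :=
  stmt_18_general a f₀ hcont hf0 hsign ε hε
end
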